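/- arXiv:2009.02450 — 2 statements merged into one kernel-verified Lean document; each statement's English description precedes it below -/
import Mathlib

section
/- Let ε < 1 be a real number and define f(s) = (1 − e^{−2(1−ε)s})/((1 − e^{−s})·(1 − e^{−(1−ε)s})³) for s > 0. Then f has Hilbert-series Laurent coefficients (2/(1−ε)², (2−ε)/(1−ε)²) of order 3 at s = 0; i.e., s³·f(s) → 2/(1−ε)² and s²·(f(s) − 2/((1−ε)² s³)) → (2−ε)/(1−ε)² as s → 0⁺. -/
/-!
Put `c = 1 - ε` and `φ(x) = (1 - e^{-x})/x`, extended by `φ(0) = 1`. Then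
`f(s) = (2/c²)·R(s)/s³` with `R(s) = φ(2cs)/(φ(s)·φ(cs)³)`, so the two Laurent coefficients are
`(2/c²)·R(0)` and `(2/c²)·R'(0)`. From `e^{-x} = 1 - x + x²/2 + o(x²)` we get `φ'(0) = -1/2`,
hence `R'(0) = -c + 1/2 + 3c/2 = (1 + c)/2 = (2 - ε)/2`.
-/

open Filter Real Set Topology

/-- `f` has Hilbert-series Laurent coefficients `(a₀, a₁)` of order `n` at `s = 0`:
`sⁿ·f(s) → a₀` and `sⁿ⁻¹·(f(s) − a₀/sⁿ) → a₁` as `s → 0⁺`. -/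
def HSLaurentCoeffs (f : ℝ → ℝ) (n : ℕ) (a₀ a₁ : ℝ) : Prop :=
  Filter.Tendsto (fun s => s ^ n * f s) (nhdsWithin 0 (Set.Ioi 0)) (nhds a₀) ∧
  Filter.Tendsto (fun s => s ^ (n - 1) * (f s - a₀ / s ^ n))
    (nhdsWithin 0 (Set.Ioi 0)) (nhds a₁)

theorem HSLaurentCoeffs.of_eq_mul_div_pow {f R : ℝ → ℝ} {n : ℕ} {a b : ℝ} (hn : n ≠ 0)
    (hR : HasDerivWithinAt R b (Ioi 0) 0) (hR₀ : R 0 = 1)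
    (hf : ∀ s > 0, f s = a * R s / s ^ n) :
    HSLaurentCoeffs f n a (a * b) := by
  have hpos : ∀ᶠ s in 𝓝[>] (0 : ℝ), 0 < s := self_mem_nhdsWithin
  constructor
  · have hlim : Tendsto R (𝓝[>] 0) (𝓝 1) := hR₀ ▸ hR.continuousWithinAt.tendsto
    refine (mul_one a ▸ tendsto_const_nhds.mul hlim).congr' ?_
    filter_upwards [hpos] with s hs
    rw [hf s hs, mul_div_cancel₀ _ (pow_ne_zero n hs.ne')]
  · have hslope : Tendsto (slope R 0) (𝓝[>] 0) (𝓝 b) :=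
      (hasDerivWithinAt_iff_tendsto_slope' (lt_irrefl 0)).mp hR
    refine (tendsto_const_nhds.mul hslope).congr' ?_
    filter_upwards [hpos] with s hs
    rw [hf s hs, slope_def_field, hR₀, sub_zero, ← pow_sub_one_mul hn]
    field_simp

noncomputable def oneSubExpNegDiv (x : ℝ) : ℝ := if x = 0 then 1 else (1 - exp (-x)) / x

@[simp]
theorem oneSubExpNegDiv_zero : oneSubExpNegDiv 0 = 1 := if_pos rfl

theorem mul_oneSubExpNegDiv (x : ℝ) : x * oneSubExpNegDiv x = 1 - exp (-x) := by
  rcases eq_or_ne x 0 with rfl | hx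
  · simp
  · rw [oneSubExpNegDiv, if_neg hx, mul_div_cancel₀ _ hx]

theorem hasDerivAt_oneSubExpNegDiv : HasDerivAt oneSubExpNegDiv (-1 / 2) 0 := by
  rw [hasDerivAt_iff_tendsto_slope]
  have hrem : Tendsto (fun x => (exp (-x) - (1 - x + x ^ 2 / 2)) / x ^ 2) (𝓝 0) (𝓝 0) := by
    refine ((exp_sub_sum_range_succ_isLittleO_pow 2).comp_tendsto
      (by simpa using tendsto_neg (0 : ℝ))).tendsto_div_nhds_zero.congr fun x => ?_
    simp only [Function.comp_apply, Finset.sum_range_succ, Finset.sum_range_zero, Nat.factorial]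
    push_cast
    ring
  refine ((tendsto_const_nhds.sub hrem).mono_left nhdsWithin_le_nhds).congr' ?_
    |>.trans (by rw [sub_zero])
  filter_upwards [self_mem_nhdsWithin] with x (hx : x ≠ 0)
  rw [slope_def_field, oneSubExpNegDiv_zero, oneSubExpNegDiv, if_neg hx, sub_zero]
  field_simp
  ring

theorem hasDerivAt_oneSubExpNegDiv_const_mul (k : ℝ) :
    HasDerivAt (fun s => oneSubExpNegDiv (k * s)) (-k / 2) 0 :=
  (HasDerivAt.comp_of_eq (hh₂ := hasDerivAt_oneSubExpNegDiv)
    (hh := (hasDerivAt_id 0).const_mul k) (hy := by simp)).congr_deriv (by ring)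

/-- The regularized Hilbert series of the conifold under the test symmetry `(−1,−1,−1,0)`,
`f(s) = (1 − e^{−2(1−ε)s})/((1 − e^{−s})(1 − e^{−(1−ε)s})³)`, has Laurent coefficients
`(2/(1−ε)², (2−ε)/(1−ε)²)` of order 3. -/
theorem conifold_regularized_hs_coeffs (ε : ℝ) (hε : ε < 1) :
    HSLaurentCoeffs
      (fun s => (1 - Real.exp (-(2 * (1 - ε) * s)))
        / ((1 - Real.exp (-s)) * (1 - Real.exp (-((1 - ε) * s))) ^ 3))
      3 (2 / (1 - ε) ^ 2) ((2 - ε) / (1 - ε) ^ 2) := by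
  have hc : 1 - ε ≠ 0 := by linarith
  set c := 1 - ε
  have hR : HasDerivAt (fun s => oneSubExpNegDiv (2 * c * s) /
      (oneSubExpNegDiv s * oneSubExpNegDiv (c * s) ^ 3)) ((1 + c) / 2) 0 := by
    refine ((hasDerivAt_oneSubExpNegDiv_const_mul (2 * c)).div
      (hasDerivAt_oneSubExpNegDiv.mul ((hasDerivAt_oneSubExpNegDiv_const_mul c).pow 3))
      (by simp)).congr_deriv ?_
    simp only [Pi.mul_apply, Pi.pow_apply, mul_zero, oneSubExpNegDiv_zero]
    norm_num
    ring
  convert HSLaurentCoeffs.of_eq_mul_div_pow three_ne_zero hR.hasDerivWithinAt (by simp)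
    fun s (hs : 0 < s) => ?_ using 1
  · field_simp
    ring
  · have hs₀ : s ≠ 0 := hs.ne'
    simp only [← mul_oneSubExpNegDiv, mul_pow]
    field_simp
end

section
/- For every natural number n with 0 ≤ n ≤ 8, the function f(s) = (1 + (7−n)·e^{−2s} + e^{−4s})/(1 − e^{−2s})³, defined for s > 0, has Hilbert-series Laurent coefficients (a₀, a₁) of order 3 at s = 0 with a₀ = a₁ = (9−n)/8. -/
open Filter Real Set Topology

theorem tendsto_one_sub_exp_neg_mul_div (k : ℝ) :
    Tendsto (fun s => (1 - exp (-(k * s))) / s) (𝓝[≠] 0) (𝓝 k) := by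
  have h : HasDerivAt (fun s => 1 - exp (-(k * s))) k 0 := by
    simpa using (((hasDerivAt_id' 0).const_mul k).neg.exp).const_sub 1
  simpa [div_eq_inv_mul] using h.tendsto_slope_zero

theorem tendsto_mul_sub_one_sub_exp_neg_mul_div_sq (k : ℝ) :
    Tendsto (fun s => (k * s - (1 - exp (-(k * s)))) / s ^ 2) (𝓝[≠] 0) (𝓝 (k ^ 2 / 2)) := by
  have hderiv (s : ℝ) :
      HasDerivAt (fun s => k * s - (1 - exp (-(k * s)))) (k * (1 - exp (-(k * s)))) s := by
    have hlin := (hasDerivAt_id' s).const_mul k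
    refine (hlin.sub (hlin.neg.exp.const_sub 1)).congr_deriv ?_
    simp only [Pi.neg_apply]
    ring
  have hcont : Continuous fun s => k * s - (1 - exp (-(k * s))) := by fun_prop
  refine HasDerivAt.lhopital_zero_nhdsNE (.of_forall hderiv)
    (.of_forall fun s => by simpa using hasDerivAt_pow 2 s) ?_ ?_ ?_ ?_
  · filter_upwards [self_mem_nhdsWithin] with s hs
    simpa using hs
  · simpa using (hcont.tendsto 0).mono_left nhdsWithin_le_nhds
  · simpa using ((continuous_pow 2).tendsto (0 : ℝ)).mono_left nhdsWithin_le_nhds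
  · convert (tendsto_one_sub_exp_neg_mul_div k).const_mul (k / 2) using 2 with s
    · field_simp
    · ring

namespace HSLaurentCoeffs

variable {f g : ℝ → ℝ} {n : ℕ} {a₀ a₁ : ℝ}

theorem congr' (h : HSLaurentCoeffs f n a₀ a₁) (hfg : f =ᶠ[𝓝[>] 0] g) :
    HSLaurentCoeffs g n a₀ a₁ :=
  ⟨h.1.congr' (hfg.mono fun s hs => by rw [hs]), h.2.congr' (hfg.mono fun s hs => by rw [hs])⟩

theorem const_mul (h : HSLaurentCoeffs f n a₀ a₁) (c : ℝ) :
    HSLaurentCoeffs (fun s => c * f s) n (c * a₀) (c * a₁) :=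
  ⟨(h.1.const_mul c).congr fun s => by ring, (h.2.const_mul c).congr fun s => by ring⟩

theorem add_of_tendsto {b : ℝ} (h : HSLaurentCoeffs f (n + 1) a₀ a₁)
    (hg : Tendsto (fun s => s ^ n * g s) (𝓝[>] 0) (𝓝 b)) :
    HSLaurentCoeffs (fun s => f s + g s) (n + 1) a₀ (a₁ + b) := by
  have hs : Tendsto (fun s : ℝ => s) (𝓝[>] 0) (𝓝 0) := tendsto_nhdsWithin_of_tendsto_nhds tendsto_id
  constructor
  · simpa using (h.1.add (hs.mul hg)).congr fun s => by ring
  · have h₂ := h.2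
    simp only [Nat.add_sub_cancel] at h₂ ⊢
    exact (h₂.add hg).congr fun s => by ring

end HSLaurentCoeffs

open Finset in
theorem inv_pow_sub_inv_pow_eq (m : ℕ) {a q s : ℝ} (ha : a ≠ 0) (hq : q ≠ 0) (hs : s ≠ 0) :
    s ^ m * (((s * q) ^ (m + 1))⁻¹ - (a ^ (m + 1))⁻¹ / s ^ (m + 1)) =
      (a * s - s * q) / s ^ 2 * (∑ i ∈ range (m + 1), a ^ i * q ^ (m - i)) / (q * a) ^ (m + 1) := by
  have hgeom : (∑ i ∈ range (m + 1), a ^ i * q ^ (m - i)) * (a - q) = a ^ (m + 1) - q ^ (m + 1) := by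
    simpa using geom_sum₂_mul a q (m + 1)
  rw [show (a * s - s * q) / s ^ 2 = (a - q) / s by field_simp, div_mul_eq_mul_div,
    mul_comm (a - q), hgeom]
  field_simp
  ring

open Finset in
theorem hsLaurentCoeffs_inv_pow {u : ℝ → ℝ} {a b : ℝ} (ha : a ≠ 0) (m : ℕ)
    (hu : Tendsto (fun s => u s / s) (𝓝[>] 0) (𝓝 a))
    (hu' : Tendsto (fun s => (a * s - u s) / s ^ 2) (𝓝[>] 0) (𝓝 b)) :
    HSLaurentCoeffs (fun s => (u s ^ (m + 1))⁻¹) (m + 1) (a ^ (m + 1))⁻¹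
      ((m + 1) * b / a ^ (m + 2)) := by
  have hu_eq : ∀ᶠ s in 𝓝[>] 0, u s = s * (u s / s) :=
    eventually_mem_nhdsWithin.mono fun s hs => (mul_div_cancel₀ _ (ne_of_gt hs)).symm
  constructor
  · refine ((hu.pow (m + 1)).inv₀ (pow_ne_zero _ ha)).congr' ?_
    filter_upwards [eventually_mem_nhdsWithin, hu_eq] with s hs hus
    generalize u s / s = q at hus ⊢
    rw [hus, mul_pow, mul_inv, ← mul_assoc, mul_inv_cancel₀ (pow_ne_zero _ (ne_of_gt hs)), one_mul]
  · have hsum : Tendsto (fun s => ∑ i ∈ range (m + 1), a ^ i * (u s / s) ^ (m - i)) (𝓝[>] 0)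
        (𝓝 ((m + 1) * a ^ m)) := by
      convert tendsto_finsetSum _ fun i _ => tendsto_const_nhds.mul (hu.pow (m - i)) using 1
      rw [sum_congr rfl fun i hi => (pow_add a i (m - i)).symm.trans
        (by rw [Nat.add_sub_cancel' (mem_range_succ_iff.mp hi)])]
      simp
    have hlim := (hu'.mul hsum).div ((hu.mul tendsto_const_nhds).pow (m + 1))
      (pow_ne_zero _ (mul_ne_zero ha ha))
    convert hlim.congr' ?_ using 2
    · field_simp
      ring
    filter_upwards [eventually_mem_nhdsWithin, hu_eq, hu.eventually_ne ha] with s hs hus hq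
    simp only [Pi.div_apply, Nat.add_sub_cancel]
    generalize u s / s = q at hus hq ⊢
    rw [hus]
    exact (inv_pow_sub_inv_pow_eq m ha hq (ne_of_gt hs)).symm

theorem del_pezzo_hs_coeffs_general (n : ℕ) :
    HSLaurentCoeffs
      (fun s => (1 + (7 - (n : ℝ)) * Real.exp (-(2 * s)) + Real.exp (-(4 * s)))
        / (1 - Real.exp (-(2 * s))) ^ 3)
      3 ((9 - (n : ℝ)) / 8) ((9 - (n : ℝ)) / 8) := by
  set c := 9 - (n : ℝ) with hc
  have hu := (tendsto_one_sub_exp_neg_mul_div 2).mono_left (nhdsGT_le_nhdsNE 0)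
  have hu' := (tendsto_mul_sub_one_sub_exp_neg_mul_div_sq 2).mono_left (nhdsGT_le_nhdsNE 0)
  have hlead := (hsLaurentCoeffs_inv_pow two_ne_zero 2 hu hu').const_mul c
  have hlower : Tendsto (fun s => s ^ 2 *
      (-(c * ((1 - exp (-(2 * s))) ^ 2)⁻¹) + ((1 - exp (-(2 * s))) ^ 1)⁻¹))
      (𝓝[>] 0) (𝓝 (-(c * (2 ^ 2)⁻¹) + 0 * (2 ^ 1)⁻¹)) :=
    ((((hsLaurentCoeffs_inv_pow two_ne_zero 1 hu hu').1.const_mul c).neg).add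
      ((tendsto_nhdsWithin_of_tendsto_nhds tendsto_id).mul
        (hsLaurentCoeffs_inv_pow two_ne_zero 0 hu hu').1)).congr fun s => by rw [id]; ring
  convert (hlead.add_of_tendsto hlower).congr' ?_ using 1
  · norm_num; ring
  · norm_num; ring
  filter_upwards [eventually_mem_nhdsWithin] with s hs
  have hu0 : 1 - exp (-(2 * s)) ≠ 0 :=
    sub_ne_zero.mpr (exp_lt_one_iff.mpr (by linarith [hs.out])).ne'
  have hE4 : exp (-(4 * s)) = exp (-(2 * s)) ^ 2 := by rw [← exp_nat_mul]; ring_nf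
  rw [hE4, hc]
  field_simp
  ring

/-- The Hilbert series of the affine cone over the del Pezzo surface dPₙ (`0 ≤ n ≤ 8`),
`f(s) = (1 + (7−n)e^{−2s} + e^{−4s})/(1 − e^{−2s})³`, has Laurent coefficients
`a₀ = a₁ = (9−n)/8` of order 3. -/
theorem del_pezzo_hs_coeffs (n : ℕ) (hn : n ≤ 8) :
    HSLaurentCoeffs
      (fun s => (1 + (7 - (n : ℝ)) * Real.exp (-(2 * s)) + Real.exp (-(4 * s)))
        / (1 - Real.exp (-(2 * s))) ^ 3)
      3 ((9 - (n : ℝ)) / 8) ((9 - (n : ℝ)) / 8) :=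
  del_pezzo_hs_coeffs_general n
end
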